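/- Let u be a bounded C² solution of the system Δu = ∇H(u) on ℝ^N such that H_{u_i}(u(x)) ≤ 0 for every i and every x ∈ ℝ^N. Then there is a constant C > 0, depending only on N, m and max_i ‖u_i‖_{L^∞(ℝ^N)}, such that Σ_{i=1}^m ∫_{B_R} |∇u_i|² dx ≤ C R^{N−2} for every R ≥ 1. -/

import Mathlib

open MeasureTheory Metric Filter Finset

noncomputable section

/-- Partial derivative of `f` at `x` in the `k`-th coordinate direction of `ℝ^N`. -/
def pd {N : ℕ} (f : EuclideanSpace ℝ (Fin N) → ℝ) (k : Fin N)
    (x : EuclideanSpace ℝ (Fin N)) : ℝ :=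
  fderiv ℝ f x (EuclideanSpace.single k 1)

/-- Laplacian of `f` at `x`: the sum of the pure second partial derivatives. -/
def lap {N : ℕ} (f : EuclideanSpace ℝ (Fin N) → ℝ) (x : EuclideanSpace ℝ (Fin N)) : ℝ :=
  ∑ k, pd (pd f k) k x

/-- `H_{u_i}`, the `i`-th partial derivative of `H : ℝ^m → ℝ`. -/
def Hp {m : ℕ} (H : EuclideanSpace ℝ (Fin m) → ℝ) (i : Fin m)
    (p : EuclideanSpace ℝ (Fin m)) : ℝ :=
  fderiv ℝ H p (EuclideanSpace.single i 1)

/-- `H_{u_i u_j}`, the second mixed partial derivative of `H : ℝ^m → ℝ`. -/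
def Hpp {m : ℕ} (H : EuclideanSpace ℝ (Fin m) → ℝ) (i j : Fin m)
    (p : EuclideanSpace ℝ (Fin m)) : ℝ :=
  fderiv ℝ (Hp H i) p (EuclideanSpace.single j 1)

/-- `u` solves the system `Δ u = ∇H(u)` on `Ω`. -/
def IsSolution {N m : ℕ} (H : EuclideanSpace ℝ (Fin m) → ℝ)
    (u : EuclideanSpace ℝ (Fin N) → EuclideanSpace ℝ (Fin m))
    (Ω : Set (EuclideanSpace ℝ (Fin N))) : Prop :=
  ∀ i : Fin m, ∀ x ∈ Ω, lap (fun y => u y i) x = Hp H i (u x)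

/-- `u` is a stable solution of `Δ u = ∇H(u)` on `Ω`: the second variation of the
energy is nonnegative on test functions `ζ_1, …, ζ_m ∈ C¹_c(Ω)`. -/
def Stable {N m : ℕ} (H : EuclideanSpace ℝ (Fin m) → ℝ)
    (u : EuclideanSpace ℝ (Fin N) → EuclideanSpace ℝ (Fin m))
    (Ω : Set (EuclideanSpace ℝ (Fin N))) : Prop :=
  ∀ ζ : Fin m → EuclideanSpace ℝ (Fin N) → ℝ,
    (∀ i, ContDiff ℝ 1 (ζ i)) → (∀ i, HasCompactSupport (ζ i)) →
    (∀ i, tsupport (ζ i) ⊆ Ω) →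
    0 ≤ (∑ i, ∫ x in Ω, ‖gradient (ζ i) x‖ ^ 2) +
        ∑ i, ∑ j, ∫ x in Ω, Hpp H i j (u x) * ζ i x * ζ j x

/-- `u` is a pointwise stable solution of `Δ u = ∇H(u)` on `Ω`: there are `λ ≥ 0`
and nowhere-vanishing `C²` functions `φ_i` with `Δ φ_i = Σ_j H_{u_i u_j}(u) φ_j - λ φ_i`
and `H_{u_i u_j}(u) φ_i φ_j ≤ 0` for `i < j`. -/
def PointwiseStable {N m : ℕ} (H : EuclideanSpace ℝ (Fin m) → ℝ)
    (u : EuclideanSpace ℝ (Fin N) → EuclideanSpace ℝ (Fin m))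
    (Ω : Set (EuclideanSpace ℝ (Fin N))) : Prop :=
  ∃ (lam : ℝ) (φ : Fin m → EuclideanSpace ℝ (Fin N) → ℝ),
    0 ≤ lam ∧ (∀ i, ContDiff ℝ 2 (φ i)) ∧ (∀ i, ∀ x ∈ Ω, φ i x ≠ 0) ∧
    (∀ i, ∀ x ∈ Ω, lap (φ i) x = (∑ j, Hpp H i j (u x) * φ j x) - lam * φ i x) ∧
    (∀ i j : Fin m, i < j → ∀ x ∈ Ω, Hpp H i j (u x) * φ i x * φ j x ≤ 0)

/-- The system `Δ u = ∇H(u)` is orientable along `u`: there exist nonzero `C¹`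
functions `θ_i`, none of which changes sign, with `H_{u_i u_j}(u) θ_i θ_j ≤ 0` for `i < j`. -/
def OrientableAlong {N m : ℕ} (H : EuclideanSpace ℝ (Fin m) → ℝ)
    (u : EuclideanSpace ℝ (Fin N) → EuclideanSpace ℝ (Fin m)) : Prop :=
  ∃ θ : Fin m → EuclideanSpace ℝ (Fin N) → ℝ,
    (∀ i, ContDiff ℝ 1 (θ i)) ∧ (∀ i, ∃ x, θ i x ≠ 0) ∧
    (∀ i, (∀ x, 0 ≤ θ i x) ∨ (∀ x, θ i x ≤ 0)) ∧
    (∀ i j : Fin m, i < j → ∀ x, Hpp H i j (u x) * θ i x * θ j x ≤ 0)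

/-- A function `w : ℝ^N → ℝ` is one-dimensional. -/
def OneDim {N : ℕ} (w : EuclideanSpace ℝ (Fin N) → ℝ) : Prop :=
  ∃ (a : EuclideanSpace ℝ (Fin N)) (g : ℝ → ℝ), ∀ x, w x = g (inner ℝ a x)

/-- `u` is an `H`-monotone solution with respect to the coordinate direction `ν`. -/
def HMonotone {N m : ℕ} (H : EuclideanSpace ℝ (Fin m) → ℝ)
    (u : EuclideanSpace ℝ (Fin N) → EuclideanSpace ℝ (Fin m)) (ν : Fin N) : Prop :=
  (∀ (i : Fin m) (x : EuclideanSpace ℝ (Fin N)), pd (fun y => u y i) ν x ≠ 0) ∧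
  (∀ i j : Fin m, i < j → ∀ x,
    Hpp H i j (u x) * (pd (fun y => u y i) ν x * pd (fun y => u y j) ν x) ≤ 0)

/-- The point `(x', t) ∈ ℝ^{n+1}` built from `x' ∈ ℝ^n` and a last coordinate `t`. -/
def snocPt {n : ℕ} (x' : EuclideanSpace ℝ (Fin n)) (t : ℝ) :
    EuclideanSpace ℝ (Fin (n + 1)) :=
  WithLp.toLp 2 (Fin.snoc (α := fun _ => ℝ) (WithLp.ofLp x') t)

/-!
Each component `w = u_i` satisfies `Δw = H_{u_i}(u) ≤ 0` and `|w| ≤ B`. Testing `Δw` against the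
nonpositive function `ζ² (w - B)` and integrating by parts gives the Caccioppoli inequality
`∫ ζ² |∇w|² ≤ 16 B² ∫ |∇ζ|²`. For the cutoff `ζ(x) = φ(x / R)`, with `φ` a fixed bump equal to `1`
on `B_1` and vanishing outside `B_2`, one has `ζ = 1` on `B_R` and `|∇ζ| ≤ K / R` with `∇ζ = 0`
outside `B_{2R}`, so the right-hand side is at most `16 B² K² R⁻² |B_{2R}| = O(R^{N-2})`.
-/

open scoped Gradient RealInnerProductSpace

section Gradient

variable {E : Type*} [NormedAddCommGroup E] [InnerProductSpace ℝ E]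

lemma neg_two_mul_mul_inner_le (a b : ℝ) (v w : E) :
    -(2 * a * b * ⟪v, w⟫) ≤ a ^ 2 * ‖w‖ ^ 2 / 2 + 2 * b ^ 2 * ‖v‖ ^ 2 := by
  have hcs : -(2 * a * b * ⟪v, w⟫) ≤ 2 * (|a| * ‖w‖) * (|b| * ‖v‖) := by
    have := abs_real_inner_le_norm v w
    have := neg_abs_le (2 * a * b * ⟪v, w⟫)
    rw [abs_mul, abs_mul, abs_mul, abs_two] at this
    nlinarith [abs_nonneg a, abs_nonneg b, mul_nonneg (abs_nonneg a) (abs_nonneg b)]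
  nlinarith [sq_nonneg (|a| * ‖w‖ - 2 * (|b| * ‖v‖)), sq_abs a, sq_abs b]

variable [CompleteSpace E] {f : E → ℝ}

lemma HasCompactSupport.gradient (hf : HasCompactSupport f) : HasCompactSupport (∇ f) :=
  (hf.fderiv (𝕜 := ℝ)).comp_left (map_zero _)

lemma ContDiff.continuous_gradient (hf : ContDiff ℝ 1 f) : Continuous (∇ f) :=
  (InnerProductSpace.toDual ℝ E).symm.continuous.comp (hf.continuous_fderiv one_ne_zero)

end Gradient

section Coordinates

variable {N : ℕ}

lemma pd_eq_gradient_apply (f : EuclideanSpace ℝ (Fin N) → ℝ) (k : Fin N)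
    (x : EuclideanSpace ℝ (Fin N)) : pd f k x = ∇ f x k := by
  rw [pd, ← inner_gradient_left, EuclideanSpace.inner_single_right]
  simp

lemma inner_gradient_eq_sum_pd (f g : EuclideanSpace ℝ (Fin N) → ℝ)
    (x : EuclideanSpace ℝ (Fin N)) : ⟪∇ f x, ∇ g x⟫ = ∑ k, pd f k x * pd g k x := by
  simp only [PiLp.inner_apply, pd_eq_gradient_apply, RCLike.inner_apply, conj_trivial, mul_comm]

lemma contDiff_pd {n : WithTop ℕ∞} {f : EuclideanSpace ℝ (Fin N) → ℝ}
    (hf : ContDiff ℝ (n + 1) f) (k : Fin N) : ContDiff ℝ n (pd f k) :=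
  (hf.fderiv_right le_rfl).clm_apply contDiff_const

theorem integral_mul_lap_eq_neg_integral_inner_gradient {f w : EuclideanSpace ℝ (Fin N) → ℝ}
    (hf : ContDiff ℝ 1 f) (hfs : HasCompactSupport f) (hw : ContDiff ℝ 2 w) :
    ∫ x, f x * lap w x = -∫ x, ⟪∇ f x, ∇ w x⟫ := by
  have hpdw (k : Fin N) : ContDiff ℝ 1 (pd w k) := contDiff_pd hw k
  have hpdf (k : Fin N) : Continuous (pd f k) := (contDiff_pd (n := 0) hf k).continuous
  have hint_pd (k : Fin N) : Integrable (fun x => pd f k x * pd w k x) :=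
    ((hpdf k).mul (hpdw k).continuous).integrable_of_hasCompactSupport
      (hfs.fderiv_apply (𝕜 := ℝ) _).mul_right
  have hint_lap (k : Fin N) : Integrable (fun x => f x * pd (pd w k) k x) :=
    (hf.continuous.mul (contDiff_pd (n := 0) (hpdw k) k).continuous).integrable_of_hasCompactSupport
      hfs.mul_right
  have hibp (k : Fin N) : ∫ x, f x * pd (pd w k) k x = -∫ x, pd f k x * pd w k x :=
    integral_mul_fderiv_eq_neg_fderiv_mul_of_integrable (hint_pd k) (hint_lap k)
      ((hf.continuous.mul (hpdw k).continuous).integrable_of_hasCompactSupport hfs.mul_right)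
      (fun x _ => hf.differentiable one_ne_zero x)
      (fun x _ => (hpdw k).differentiable one_ne_zero x)
  simp only [lap, Finset.mul_sum, inner_gradient_eq_sum_pd]
  rw [integral_finsetSum _ fun k _ => hint_lap k, integral_finsetSum _ fun k _ => hint_pd k,
    ← Finset.sum_neg_distrib]
  exact Finset.sum_congr rfl fun k _ => hibp k

end Coordinates

section Cutoff

variable {E : Type*} [NormedAddCommGroup E] [InnerProductSpace ℝ E]

def unitBump : ContDiffBump (0 : E) := ⟨1, 2, one_pos, one_lt_two⟩

def cutoff (R : ℝ) (x : E) : ℝ := (unitBump : ContDiffBump (0 : E)) (R⁻¹ • x)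

lemma cutoff_eq_one {R : ℝ} (hR : 0 < R) {x : E} (hx : ‖x‖ ≤ R) : cutoff R x = 1 := by
  refine (unitBump : ContDiffBump (0 : E)).one_of_mem_closedBall ?_
  rw [mem_closedBall_zero_iff, norm_smul, norm_inv, Real.norm_of_nonneg hR.le]
  exact inv_mul_le_one_of_le₀ hx hR.le

lemma cutoff_eq_zero {R : ℝ} (hR : 0 < R) {x : E} (hx : 2 * R ≤ ‖x‖) : cutoff R x = 0 := by
  refine (unitBump : ContDiffBump (0 : E)).zero_of_le_dist ?_
  rw [dist_zero_right, norm_smul, norm_inv, Real.norm_of_nonneg hR.le]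
  show (2 : ℝ) ≤ R⁻¹ * ‖x‖
  exact (le_inv_mul_iff₀ hR).2 (by linarith)

lemma contDiff_cutoff {n : ℕ∞} (R : ℝ) : ContDiff ℝ n (cutoff (E := E) R) :=
  (unitBump : ContDiffBump (0 : E)).contDiff.comp (contDiff_const_smul _)

lemma tsupport_cutoff_subset {R : ℝ} (hR : 0 < R) :
    tsupport (cutoff (E := E) R) ⊆ closedBall 0 (2 * R) :=
  closure_minimal (fun x hx => by
    by_contra h
    rw [mem_closedBall_zero_iff, not_le] at h
    exact hx (cutoff_eq_zero hR h.le)) isClosed_closedBall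

variable [FiniteDimensional ℝ E]

lemma hasCompactSupport_cutoff {R : ℝ} (hR : 0 < R) : HasCompactSupport (cutoff (E := E) R) :=
  (isCompact_closedBall 0 (2 * R)).of_isClosed_subset (isClosed_tsupport _)
    (tsupport_cutoff_subset hR)

lemma exists_norm_gradient_cutoff_le :
    ∃ K, ∀ R, 0 < R → ∀ x : E, ‖∇ (cutoff R) x‖ ≤ K / R := by
  obtain ⟨K, hK⟩ := ((unitBump (E := E)).contDiff.continuous_fderiv
    one_ne_zero).bounded_above_of_compact_support (unitBump.hasCompactSupport.fderiv (𝕜 := ℝ))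
  refine ⟨K, fun R hR x => ?_⟩
  unfold cutoff
  rw [gradient, LinearIsometryEquiv.norm_map, fderiv_comp_smul, norm_smul, norm_inv,
    Real.norm_of_nonneg hR.le, inv_mul_eq_div]
  exact div_le_div_of_nonneg_right (hK _) hR.le

lemma gradient_cutoff_eq_zero {R : ℝ} (hR : 0 < R) {x : E} (hx : x ∉ closedBall 0 (2 * R)) :
    ∇ (cutoff R) x = 0 := by
  have : x ∉ Function.support (fderiv ℝ (cutoff (E := E) R)) :=
    fun h => hx (tsupport_cutoff_subset hR (support_fderiv_subset ℝ h))
  rw [gradient, Function.notMem_support.1 this, map_zero]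

variable [MeasurableSpace E] [BorelSpace E] (μ : Measure E) [μ.IsAddHaarMeasure]

lemma integral_norm_gradient_cutoff_sq_le {K R : ℝ} (hR : 0 < R)
    (hK : ∀ x : E, ‖∇ (cutoff R) x‖ ≤ K / R) :
    ∫ x, ‖∇ (cutoff R) x‖ ^ 2 ∂μ
      ≤ 2 ^ Module.finrank ℝ E * μ.real (ball 0 1) * K ^ 2
        * R ^ ((Module.finrank ℝ E : ℤ) - 2) := by
  have hvan : ∀ x ∉ closedBall (0 : E) (2 * R), ‖∇ (cutoff R) x‖ ^ 2 = 0 := fun x hx => by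
    rw [gradient_cutoff_eq_zero hR hx, norm_zero, sq, mul_zero]
  rw [← setIntegral_eq_integral_of_forall_compl_eq_zero hvan]
  calc ∫ x in closedBall 0 (2 * R), ‖∇ (cutoff R) x‖ ^ 2 ∂μ
      ≤ (K / R) ^ 2 * μ.real (closedBall 0 (2 * R)) := by
        refine (Real.le_norm_self _).trans (norm_setIntegral_le_of_norm_le_const
          measure_closedBall_lt_top fun x _ => ?_)
        rw [Real.norm_of_nonneg (by positivity)]
        exact pow_le_pow_left₀ (norm_nonneg _) (hK x) 2
    _ = _ := by
        rw [Measure.addHaar_real_closedBall μ 0 (by positivity), zpow_sub₀ hR.ne', zpow_natCast,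
          mul_pow]
        field_simp

end Cutoff

section Caccioppoli

variable {N : ℕ}

lemma integrable_sq_mul_norm_gradient_sq {ζ w : EuclideanSpace ℝ (Fin N) → ℝ}
    (hζ : Continuous ζ) (hζs : HasCompactSupport ζ) (hw : ContDiff ℝ 1 w) :
    Integrable (fun x => ζ x ^ 2 * ‖∇ w x‖ ^ 2) :=
  ((hζ.pow 2).mul (hw.continuous_gradient.norm.pow 2)).integrable_of_hasCompactSupport
    (hζs.mono fun x hx hζx => hx (by simp [hζx]))

lemma inner_gradient_sq_mul_sub_const {ζ w : EuclideanSpace ℝ (Fin N) → ℝ}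
    (hζ : Differentiable ℝ ζ) (hw : Differentiable ℝ w) (B : ℝ)
    (x : EuclideanSpace ℝ (Fin N)) :
    ⟪∇ (fun y => ζ y ^ 2 * (w y - B)) x, ∇ w x⟫
      = 2 * ζ x * (w x - B) * ⟪∇ ζ x, ∇ w x⟫ + ζ x ^ 2 * ‖∇ w x‖ ^ 2 := by
  have hd : HasFDerivAt (fun y => ζ y ^ 2 * (w y - B)) _ x :=
    ((hζ x).hasFDerivAt.pow 2).mul ((hw x).hasFDerivAt.sub_const B)
  rw [inner_gradient_left, hd.fderiv, inner_gradient_left,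
    ← real_inner_self_eq_norm_sq, inner_gradient_left]
  simp only [add_apply, smul_apply, smul_eq_mul]
  ring

theorem integral_sq_mul_norm_gradient_sq_le {ζ w : EuclideanSpace ℝ (Fin N) → ℝ} {A B : ℝ}
    (hζ : ContDiff ℝ 1 ζ) (hζs : HasCompactSupport ζ) (hw : ContDiff ℝ 2 w)
    (hA : ∀ x, A ≤ w x) (hB : ∀ x, w x ≤ B) (hlap : ∀ x, lap w x ≤ 0) :
    ∫ x, ζ x ^ 2 * ‖∇ w x‖ ^ 2 ≤ 4 * (B - A) ^ 2 * ∫ x, ‖∇ ζ x‖ ^ 2 := by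
  set f := fun y => ζ y ^ 2 * (w y - B)
  have hw1 : ContDiff ℝ 1 w := hw.of_le one_le_two
  have hf : ContDiff ℝ 1 f := (hζ.pow 2).mul (hw1.sub contDiff_const)
  have hfs : HasCompactSupport f := hζs.mono fun x hx hζx => hx (by simp [f, hζx])
  have hpos : 0 ≤ -∫ x, ⟪∇ f x, ∇ w x⟫ := by
    rw [← integral_mul_lap_eq_neg_integral_inner_gradient hf hfs hw]
    exact integral_nonneg fun x => mul_nonneg_of_nonpos_of_nonpos
      (mul_nonpos_of_nonneg_of_nonpos (sq_nonneg _) (sub_nonpos.2 (hB x))) (hlap x)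
  have hlow (x : EuclideanSpace ℝ (Fin N)) :
      ζ x ^ 2 * ‖∇ w x‖ ^ 2 / 2 - 2 * (B - A) ^ 2 * ‖∇ ζ x‖ ^ 2
        ≤ ⟪∇ f x, ∇ w x⟫ := by
    rw [inner_gradient_sq_mul_sub_const (hζ.differentiable one_ne_zero)
      (hw1.differentiable one_ne_zero)]
    have h1 := neg_two_mul_mul_inner_le (ζ x) (w x - B) (∇ ζ x) (∇ w x)
    have h2 : (w x - B) ^ 2 ≤ (B - A) ^ 2 := by nlinarith [hA x, hB x]
    nlinarith [mul_le_mul_of_nonneg_right h2 (sq_nonneg ‖∇ ζ x‖)]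
  have hIA := integrable_sq_mul_norm_gradient_sq hζ.continuous hζs hw1
  have hID : Integrable (fun x => ‖∇ ζ x‖ ^ 2) :=
    (hζ.continuous_gradient.norm.pow 2).integrable_of_hasCompactSupport
      (hζs.gradient.mono fun x hx h0 => hx (by simp [h0]))
  have hIG : Integrable (fun x => ⟪∇ f x, ∇ w x⟫) :=
    (hf.continuous_gradient.inner hw1.continuous_gradient).integrable_of_hasCompactSupport
      (hfs.gradient.mono fun x hx h0 => hx (by simp [h0]))
  have hmono : ∫ x, (ζ x ^ 2 * ‖∇ w x‖ ^ 2 / 2 - 2 * (B - A) ^ 2 * ‖∇ ζ x‖ ^ 2)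
      ≤ ∫ x, ⟪∇ f x, ∇ w x⟫ :=
    integral_mono ((hIA.div_const 2).sub (hID.const_mul _)) hIG hlow
  rw [integral_sub (hIA.div_const 2) (hID.const_mul _), integral_div, integral_const_mul] at hmono
  linarith

end Caccioppoli

theorem integral_ball_norm_gradient_sq_le {N : ℕ} {w : EuclideanSpace ℝ (Fin N) → ℝ}
    {B K R : ℝ} (hw : ContDiff ℝ 2 w) (hwB : ∀ x, |w x| ≤ B) (hlap : ∀ x, lap w x ≤ 0)
    (hR : 0 < R) (hK : ∀ x : EuclideanSpace ℝ (Fin N), ‖∇ (cutoff R) x‖ ≤ K / R) :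
    ∫ x in ball 0 R, ‖∇ w x‖ ^ 2 ≤ 16 * B ^ 2 *
      (2 ^ N * volume.real (ball (0 : EuclideanSpace ℝ (Fin N)) 1) * K ^ 2
        * R ^ ((N : ℤ) - 2)) := by
  have hζ : ContDiff ℝ 1 (cutoff (E := EuclideanSpace ℝ (Fin N)) R) := contDiff_cutoff R
  have hζs := hasCompactSupport_cutoff (E := EuclideanSpace ℝ (Fin N)) hR
  calc ∫ x in ball 0 R, ‖∇ w x‖ ^ 2
        = ∫ x in ball 0 R, cutoff R x ^ 2 * ‖∇ w x‖ ^ 2 :=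
        setIntegral_congr_fun measurableSet_ball fun x hx => by
          rw [cutoff_eq_one hR (mem_ball_zero_iff.1 hx).le, one_pow, one_mul]
    _ ≤ ∫ x, cutoff R x ^ 2 * ‖∇ w x‖ ^ 2 :=
        setIntegral_le_integral
          (integrable_sq_mul_norm_gradient_sq hζ.continuous hζs (hw.of_le one_le_two))
          (.of_forall fun x => by positivity)
    _ ≤ 4 * (B - -B) ^ 2 * ∫ x, ‖∇ (cutoff R) x‖ ^ 2 :=
        integral_sq_mul_norm_gradient_sq_le hζ hζs hw (fun x => neg_le_of_abs_le (hwB x))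
          (fun x => le_of_abs_le (hwB x)) hlap
    _ ≤ _ := by
        have hcut := integral_norm_gradient_cutoff_sq_le volume hR hK
        rw [finrank_euclideanSpace_fin] at hcut
        rw [show 4 * (B - -B) ^ 2 = 16 * B ^ 2 by ring]
        exact mul_le_mul_of_nonneg_left hcut (by positivity)

/-- the energy estimate `∑_i ∫_{B_R} |∇u_i|² ≤ C R^{N-2}` for bounded
solutions with `H_{u_i}(u) ≤ 0`, with `C` depending only on `N`, `m` and the bound `B`. -/
theorem stmt_17 (N m : ℕ) (B : ℝ) : ∃ C : ℝ, 0 < C ∧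
    ∀ (H : EuclideanSpace ℝ (Fin m) → ℝ)
      (u : EuclideanSpace ℝ (Fin N) → EuclideanSpace ℝ (Fin m)),
      ContDiff ℝ 2 H → ContDiff ℝ 2 u → IsSolution H u Set.univ →
      (∀ (i : Fin m) (x : EuclideanSpace ℝ (Fin N)), |u x i| ≤ B) →
      (∀ (i : Fin m) (x : EuclideanSpace ℝ (Fin N)), Hp H i (u x) ≤ 0) →
      ∀ R : ℝ, 1 ≤ R →
        (∑ i, ∫ x in ball (0 : EuclideanSpace ℝ (Fin N)) R,
            ‖gradient (fun y => u y i) x‖ ^ 2)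
          ≤ C * R ^ ((N : ℤ) - 2) := by
  obtain ⟨K, hK⟩ := exists_norm_gradient_cutoff_le (E := EuclideanSpace ℝ (Fin N))
  set c := 16 * B ^ 2 * (2 ^ N * volume.real (ball (0 : EuclideanSpace ℝ (Fin N)) 1) * K ^ 2)
  refine ⟨m * c + 1, by positivity, fun H u _ hu hsol hbound hHp R hR => ?_⟩
  have hR0 : 0 < R := one_pos.trans_le hR
  have hcomp (i : Fin m) :
      ∫ x in ball 0 R, ‖∇ (fun y => u y i) x‖ ^ 2 ≤ c * R ^ ((N : ℤ) - 2) := by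
    have hui : ContDiff ℝ 2 (fun y => u y i) :=
      (EuclideanSpace.proj i : EuclideanSpace ℝ (Fin m) →L[ℝ] ℝ).contDiff.comp hu
    refine (integral_ball_norm_gradient_sq_le hui (hbound i)
      (fun x => (hsol i x trivial).trans_le (hHp i x)) hR0 (hK R hR0)).trans_eq ?_
    ring
  calc _ ≤ ∑ _i : Fin m, c * R ^ ((N : ℤ) - 2) := Finset.sum_le_sum fun i _ => hcomp i
    _ ≤ (m * c + 1) * R ^ ((N : ℤ) - 2) := by
        rw [Finset.sum_const, Finset.card_univ, Fintype.card_fin, nsmul_eq_mul]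
        nlinarith [zpow_pos hR0 ((N : ℤ) - 2)]
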